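/- Suppose Ω_+ = 0, C_-·Ω_- = 0, C_+·Ω_-⊤ = 0, and C_-·C_+⊤ is symmetric (C_-·C_+⊤ = C_+·C_-⊤). Write M_1 = C_-·C_-† - C_+·C_+† and M_2 = C_+^#·C_+⊤ - C_-^#·C_-⊤. Then for every s ∈ ℂ such that s·I_{2n} - A is invertible and s·I_m + (1/2)·M_1 and s·I_m - (1/2)·M_2 are invertible, the annihilation–creation-form transfer function is block diagonal: G[s] = [[ (s·I_m - (1/2)·M_1)·(s·I_m + (1/2)·M_1)^{-1}, 0],[0, (s·I_m + (1/2)·M_2)·(s·I_m - (1/2)·M_2)^{-1} ]]; in particular BAE measurements are realized. -/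
import Mathlib


open Matrix Complex

noncomputable section

/-- The doubled-up matrix `Δ(U, V) = [[U, V],[V^#, U^#]]`. -/
def DeltaM {k r : ℕ} (U V : Matrix (Fin k) (Fin r) ℂ) :
    Matrix (Fin k ⊕ Fin k) (Fin r ⊕ Fin r) ℂ :=
  fromBlocks U V (V.map (starRingEnd ℂ)) (U.map (starRingEnd ℂ))

/-- `J_k = diag(I_k, -I_k)`. -/
def Jdg (k : ℕ) : Matrix (Fin k ⊕ Fin k) (Fin k ⊕ Fin k) ℂ :=
  fromBlocks 1 0 0 (-1)

/-- `𝒞♭ = Jₙ · 𝒞† · Jₘ` for `𝒞 = Δ(C₋, C₊)`. -/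
def ACflat {m n : ℕ} (Cm Cp : Matrix (Fin m) (Fin n) ℂ) :
    Matrix (Fin n ⊕ Fin n) (Fin m ⊕ Fin m) ℂ :=
  Jdg n * (DeltaM Cm Cp)ᴴ * Jdg m

/-- `A = -i Jₙ Ω - (1/2) 𝒞♭ 𝒞` in the annihilation–creation form. -/
def ACA {m n : ℕ} (Cm Cp : Matrix (Fin m) (Fin n) ℂ) (Om Op : Matrix (Fin n) (Fin n) ℂ) :
    Matrix (Fin n ⊕ Fin n) (Fin n ⊕ Fin n) ℂ :=
  (-Complex.I) • (Jdg n * DeltaM Om Op) - (1/2 : ℂ) • (ACflat Cm Cp * DeltaM Cm Cp)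

/-- The annihilation–creation-form transfer function
`G[s] = I + 𝒞 (sI - A)⁻¹ B` with `B = -𝒞♭` (identity scattering matrix). -/
def ACG {m n : ℕ} (Cm Cp : Matrix (Fin m) (Fin n) ℂ) (Om Op : Matrix (Fin n) (Fin n) ℂ)
    (s : ℂ) : Matrix (Fin m ⊕ Fin m) (Fin m ⊕ Fin m) ℂ :=
  1 + DeltaM Cm Cp *
    (s • (1 : Matrix (Fin n ⊕ Fin n) (Fin n ⊕ Fin n) ℂ) - ACA Cm Cp Om Op)⁻¹ *
    (-(ACflat Cm Cp))

private lemma inv_comm' {k : ℕ} {P Q : Matrix (Fin k) (Fin k) ℂ} (hP : IsUnit P)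
    (h : P * Q = Q * P) : P⁻¹ * Q = Q * P⁻¹ := by
  have hd := (Matrix.isUnit_iff_isUnit_det P).mp hP
  calc P⁻¹ * Q = P⁻¹ * Q * (P * P⁻¹) := by rw [Matrix.mul_nonsing_inv _ hd, mul_one]
    _ = P⁻¹ * (Q * P) * P⁻¹ := by noncomm_ring
    _ = P⁻¹ * P * (Q * P⁻¹) := by rw [← h]; noncomm_ring
    _ = Q * P⁻¹ := by rw [Matrix.nonsing_inv_mul _ hd, one_mul]

/-- Ω₊ = 0, C₋Ω₋ = 0, C₊Ω₋ᵀ = 0, C₋C₊ᵀ symmetric ⟹ the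
annihilation–creation-form transfer function is block diagonal with the stated blocks,
where M₁ = C₋C₋† - C₊C₊† and M₂ = C₊^#C₊ᵀ - C₋^#C₋ᵀ. -/
theorem stmt17 {m n : ℕ} (Cm Cp : Matrix (Fin m) (Fin n) ℂ)
    (Om Op : Matrix (Fin n) (Fin n) ℂ)
    (hOmHerm : Omᴴ = Om) (hOpSymm : Opᵀ = Op)
    (hOp : Op = 0) (h1 : Cm * Om = 0) (h2 : Cp * Omᵀ = 0)
    (hSym : Cm * Cpᵀ = Cp * Cmᵀ)
    (s : ℂ)
    (hs : IsUnit (s • (1 : Matrix (Fin n ⊕ Fin n) (Fin n ⊕ Fin n) ℂ) - ACA Cm Cp Om Op))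
    (hs1 : IsUnit (s • (1 : Matrix (Fin m) (Fin m) ℂ)
      + (1/2 : ℂ) • (Cm * Cmᴴ - Cp * Cpᴴ)))
    (hs2 : IsUnit (s • (1 : Matrix (Fin m) (Fin m) ℂ)
      - (1/2 : ℂ) • (Cp.map (starRingEnd ℂ) * Cpᵀ - Cm.map (starRingEnd ℂ) * Cmᵀ))) :
    ACG Cm Cp Om Op s =
      fromBlocks
        ((s • (1 : Matrix (Fin m) (Fin m) ℂ) - (1/2 : ℂ) • (Cm * Cmᴴ - Cp * Cpᴴ)) *
          (s • (1 : Matrix (Fin m) (Fin m) ℂ) + (1/2 : ℂ) • (Cm * Cmᴴ - Cp * Cpᴴ))⁻¹)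
        0 0
        ((s • (1 : Matrix (Fin m) (Fin m) ℂ)
            + (1/2 : ℂ) • (Cp.map (starRingEnd ℂ) * Cpᵀ - Cm.map (starRingEnd ℂ) * Cmᵀ)) *
          (s • (1 : Matrix (Fin m) (Fin m) ℂ)
            - (1/2 : ℂ) • (Cp.map (starRingEnd ℂ) * Cpᵀ - Cm.map (starRingEnd ℂ) * Cmᵀ))⁻¹) := by
  set M1 := Cm * Cmᴴ - Cp * Cpᴴ with hM1
  set M2 := Cp.map (starRingEnd ℂ) * Cpᵀ - Cm.map (starRingEnd ℂ) * Cmᵀ with hM2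
  set C := DeltaM Cm Cp with hC
  set Cf := ACflat Cm Cp with hCf
  -- basic conj facts
  have hmapOm : Om.map (starRingEnd ℂ) = Omᵀ := by
    have h : (Omᴴ)ᵀ = Omᵀ := by rw [hOmHerm]
    rw [Matrix.conjTranspose, Matrix.transpose_map, Matrix.transpose_transpose] at h
    exact h
  -- conjugates of products
  have hconjmul : ∀ {a b c : ℕ} (X : Matrix (Fin a) (Fin b) ℂ) (Y : Matrix (Fin b) (Fin c) ℂ),
      (X * Y).map (starRingEnd ℂ) = X.map (starRingEnd ℂ) * Y.map (starRingEnd ℂ) := by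
    intro a b c X Y
    exact Matrix.map_mul
  -- 𝒞 · (Jₙ Ω) = 0
  have h2' : Cp * Om.map (starRingEnd ℂ) = 0 := by rw [hmapOm]; exact h2
  have h1' : Cp.map (starRingEnd ℂ) * Om = 0 := by
    have := congrArg (fun X => X.map (starRingEnd ℂ)) h2'
    simp only [hconjmul] at this
    rw [Matrix.map_map] at this
    have e : Om.map (⇑(starRingEnd ℂ) ∘ ⇑(starRingEnd ℂ)) = Om := by
      ext i j; simp [Matrix.map_apply]
    rw [e] at this
    simpa using this
  have h0' : Cm.map (starRingEnd ℂ) * Om.map (starRingEnd ℂ) = 0 := by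
    have := congrArg (fun X => X.map (starRingEnd ℂ)) h1
    simpa [hconjmul] using this
  have hCJO : C * (Jdg n * DeltaM Om Op) = 0 := by
    rw [hC, hOp]
    show DeltaM Cm Cp * (Jdg n * DeltaM Om 0) = 0
    rw [DeltaM, DeltaM, Jdg, Matrix.fromBlocks_multiply, Matrix.fromBlocks_multiply]
    simp [h1, h2', h1', h0', Matrix.fromBlocks_zero]
  -- block form of 𝒞♭
  have hconjCT : ∀ {a b : ℕ} (X : Matrix (Fin a) (Fin b) ℂ),
      (X.map (starRingEnd ℂ))ᴴ = Xᵀ := by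
    intro a b X; ext i j; simp [Matrix.conjTranspose_apply, Matrix.map_apply]
  have hCfB : Cf = fromBlocks Cmᴴ (-Cpᵀ) (-Cpᴴ) Cmᵀ := by
    rw [hCf, ACflat, DeltaM, Jdg, Jdg, Matrix.fromBlocks_conjTranspose,
      Matrix.fromBlocks_multiply, Matrix.fromBlocks_multiply]
    simp [hconjCT]
  -- N = 𝒞 𝒞♭ is block diagonal
  have hblC : Cp.map (starRingEnd ℂ) * Cmᴴ - Cm.map (starRingEnd ℂ) * Cpᴴ = 0 := by
    have e1 : Cmᴴ = Cmᵀ.map (starRingEnd ℂ) := rfl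
    have e2 : Cpᴴ = Cpᵀ.map (starRingEnd ℂ) := rfl
    rw [e1, e2, ← hconjmul, ← hconjmul, hSym, sub_self]
  have hN : C * Cf = fromBlocks M1 0 0 (-M2) := by
    rw [hC, hCfB, DeltaM, Matrix.fromBlocks_multiply]
    have b11 : Cm * Cmᴴ + Cp * -Cpᴴ = M1 := by
      rw [Matrix.mul_neg, hM1, ← sub_eq_add_neg]
    have b12 : Cm * -Cpᵀ + Cp * Cmᵀ = (0 : Matrix (Fin m) (Fin m) ℂ) := by
      rw [Matrix.mul_neg, hSym, neg_add_cancel]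
    have b21 : Cp.map (starRingEnd ℂ) * Cmᴴ + Cm.map (starRingEnd ℂ) * -Cpᴴ
        = (0 : Matrix (Fin m) (Fin m) ℂ) := by
      rw [Matrix.mul_neg, ← sub_eq_add_neg]; exact hblC
    have b22 : Cp.map (starRingEnd ℂ) * -Cpᵀ + Cm.map (starRingEnd ℂ) * Cmᵀ = -M2 := by
      rw [Matrix.mul_neg, hM2]; abel
    rw [b11, b12, b21, b22]
  set P1 := s • (1 : Matrix (Fin m) (Fin m) ℂ) + (1/2 : ℂ) • M1 with hP1
  set P2 := s • (1 : Matrix (Fin m) (Fin m) ℂ) - (1/2 : ℂ) • M2 with hP2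
  set P := s • (1 : Matrix (Fin m ⊕ Fin m) (Fin m ⊕ Fin m) ℂ) + (1/2 : ℂ) • (C * Cf) with hP
  set A := s • (1 : Matrix (Fin n ⊕ Fin n) (Fin n ⊕ Fin n) ℂ) - ACA Cm Cp Om Op with hA
  -- intertwining relation
  have key : P * C = C * A := by
    rw [hP, hA, ACA, ← hCf, ← hC]
    simp only [Matrix.mul_sub, Matrix.mul_add, Matrix.add_mul, Matrix.smul_mul,
      Matrix.mul_smul, one_mul, Matrix.one_mul, Matrix.mul_one, Matrix.mul_assoc, hCJO,
      smul_zero, zero_sub, sub_neg_eq_add]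
  -- block form of P
  have hPb : P = fromBlocks P1 0 0 P2 := by
    rw [hP, hN, ← Matrix.fromBlocks_one, Matrix.fromBlocks_smul, Matrix.fromBlocks_smul,
      Matrix.fromBlocks_add]
    congr 1 <;> simp [hP1, hP2, sub_eq_add_neg]
  have hd1 := (Matrix.isUnit_iff_isUnit_det _).mp hs1
  have hd2 := (Matrix.isUnit_iff_isUnit_det _).mp hs2
  have hdA := (Matrix.isUnit_iff_isUnit_det _).mp hs
  have hdP : IsUnit P.det := by
    rw [hPb, Matrix.det_fromBlocks_zero₂₁]
    exact hd1.mul hd2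
  -- 𝒞 (sI - A)⁻¹ = P⁻¹ 𝒞
  have hCinv : C * A⁻¹ = P⁻¹ * C := by
    have e1 : P * (C * A⁻¹) = C := by
      rw [← Matrix.mul_assoc, key, Matrix.mul_assoc, Matrix.mul_nonsing_inv _ hdA,
        Matrix.mul_one]
    have e2 : P⁻¹ * (P * (C * A⁻¹)) = P⁻¹ * C := by rw [e1]
    rwa [← Matrix.mul_assoc, Matrix.nonsing_inv_mul _ hdP, Matrix.one_mul] at e2
  -- inverse of P blockwise
  have hPinv : P⁻¹ = fromBlocks P1⁻¹ 0 0 P2⁻¹ := by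
    apply Matrix.inv_eq_right_inv
    rw [hPb, Matrix.fromBlocks_multiply]
    simp [Matrix.mul_nonsing_inv _ hd1, Matrix.mul_nonsing_inv _ hd2, Matrix.fromBlocks_one]
  -- final computation
  have hG : ACG Cm Cp Om Op s = P⁻¹ * (P - C * Cf) := by
    rw [ACG, ← hC, ← hCf, ← hA, Matrix.mul_sub, Matrix.nonsing_inv_mul _ hdP,
      Matrix.mul_neg, hCinv, Matrix.mul_assoc]
    abel
  have hPsub : P - C * Cf = fromBlocks (s • 1 - (1/2 : ℂ) • M1) 0 0
      (s • 1 + (1/2 : ℂ) • M2) := by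
    rw [hPb, hN, sub_eq_add_neg, Matrix.fromBlocks_neg, Matrix.fromBlocks_add]
    have c1 : P1 + -M1 = s • 1 - (1/2 : ℂ) • M1 := by rw [hP1]; module
    have c2 : P2 + - -M2 = s • 1 + (1/2 : ℂ) • M2 := by rw [hP2]; module
    rw [c1, c2]
    simp
  -- commutation
  have hcomm : ∀ (X : Matrix (Fin m) (Fin m) ℂ),
      (s • 1 + X) * (s • 1 - X) = (s • 1 - X) * (s • 1 + X) := by
    intro X
    simp only [Matrix.add_mul, Matrix.mul_add, Matrix.sub_mul, Matrix.mul_sub,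
      Matrix.smul_mul, Matrix.mul_smul, one_mul, Matrix.mul_one, smul_add, smul_sub,
      smul_smul]
    abel
  have hb1 : P1⁻¹ * (s • 1 - (1/2 : ℂ) • M1) = (s • 1 - (1/2 : ℂ) • M1) * P1⁻¹ :=
    inv_comm' hs1 (by rw [hP1]; exact hcomm _)
  have hb2 : P2⁻¹ * (s • 1 + (1/2 : ℂ) • M2) = (s • 1 + (1/2 : ℂ) • M2) * P2⁻¹ :=
    inv_comm' hs2 (by rw [hP2]; exact (hcomm _).symm)
  rw [hG, hPsub, hPinv, Matrix.fromBlocks_multiply]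
  simp only [Matrix.mul_zero, Matrix.zero_mul, add_zero, zero_add, hb1, hb2]
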